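/- arXiv:1205.0327 — 2 statements merged into one kernel-verified Lean document; each statement's English description precedes it below -/
import Mathlib

section
/- Let G_1 and G_2 be finite connected simple graphs such that, for i = 1,2, G_i is uniquely k_i-dimensional of order n_i and has a vertex of degree n_i − 1. Then there exists a finite connected simple graph G of order n_1 + n_2 − 1 that is uniquely (k_1 + k_2)-dimensional and has a vertex of degree n_1 + n_2 − 2. -/
/-!
A universal vertex `v` is at distance `1` from every other vertex, so it separates only itself
from the others. Hence it lies in no metric basis `B` of a uniquely dimensional graph: otherwise
`B \ {v}` would leave exactly one vertex `p` unseparated from `v`, and exchanging `v` for `p` would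
give a second basis.

Identify the universal vertices `v₁, v₂` of `G₁, G₂` and join every vertex of `G₁` to every vertex
of `G₂ - v₂`. All distances are at most `2`, so distances inside each side are unchanged and cross
distances are `1`; in particular `B₁ ∪ B₂` resolves the new graph. Conversely a resolving set `W`
restricts to resolving sets of `G₁` and `G₂`, where on the `G₂` side `v₂` has to be added when `W`
contains `v₁`; as a resolving set through a universal vertex exceeds the metric dimension, `W` is
then larger than `B₁ ∪ B₂`. Otherwise counting forces `W = B₁ ∪ B₂` once `#W ≤ #(B₁ ∪ B₂)`.
-/

open SimpleGraph

def IsResolvingSet {V : Type*} (G : SimpleGraph V) (W : Finset V) : Prop :=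
  ∀ u v : V, u ≠ v → ∃ w ∈ W, G.dist u w ≠ G.dist v w

noncomputable def metricDim {V : Type*} (G : SimpleGraph V) : ℕ :=
  sInf {k | ∃ W : Finset V, IsResolvingSet G W ∧ W.card = k}

def IsMetricBasis {V : Type*} (G : SimpleGraph V) (B : Finset V) : Prop :=
  IsResolvingSet G B ∧ B.card = metricDim G

def UniquelyDimensional {V : Type*} (G : SimpleGraph V) : Prop :=
  ∃! B : Finset V, IsMetricBasis G B

def UniquelyKDimensional {V : Type*} (G : SimpleGraph V) (k : ℕ) : Prop :=
  UniquelyDimensional G ∧ metricDim G = k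

open Finset
open scoped Classical

section MetricDimension

variable {V : Type*} {G : SimpleGraph V}

lemma IsResolvingSet.metricDim_le {W : Finset V} (hW : IsResolvingSet G W) :
    metricDim G ≤ #W :=
  Nat.sInf_le ⟨W, hW, rfl⟩

lemma IsResolvingSet.exists_isMetricBasis {W : Finset V} (hW : IsResolvingSet G W) :
    ∃ B, IsMetricBasis G B :=
  Nat.sInf_mem (⟨_, W, hW, rfl⟩ : {k | ∃ W : Finset V, IsResolvingSet G W ∧ #W = k}.Nonempty)

namespace SimpleGraph.IsUniversal

variable {v : V} (hv : G.IsUniversal v)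
include hv

lemma dist_eq (x y : V) : G.dist x y = if x = y then 0 else if G.Adj x y then 1 else 2 := by
  split_ifs with hxy hadj
  · simp [hxy]
  · exact dist_eq_one_iff_adj.mpr hadj
  · have hxv : v ≠ x := by rintro rfl; exact hadj (hv hxy)
    have hyv : v ≠ y := by rintro rfl; exact hadj (hv (Ne.symm hxy)).symm
    have hle : G.dist x y ≤ 2 := by
      simpa using dist_le ((Walk.nil.cons (hv hyv)).cons (hv hxv).symm)
    have hlt : 1 < G.dist x y :=
      (Connected.of_isUniversal hv).one_lt_dist_of_ne_of_not_adj hxy hadj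
    omega

lemma dist_right_eq_one {x : V} (hx : x ≠ v) : G.dist x v = 1 :=
  dist_eq_one_iff_adj.mpr (hv (Ne.symm hx)).symm

lemma dist_left_eq_one {x : V} (hx : x ≠ v) : G.dist v x = 1 :=
  dist_eq_one_iff_adj.mpr (hv (Ne.symm hx))

lemma isResolvingSet_insert_iff {E : Finset V} :
    IsResolvingSet G (insert v E) ↔
      ∀ x y, x ≠ v → y ≠ v → x ≠ y → ∃ w ∈ E, G.dist x w ≠ G.dist y w := by
  constructor
  · intro h x y hx hy hxy
    obtain ⟨w, hw, hne⟩ := h x y hxy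
    rcases mem_insert.mp hw with rfl | hw
    · exact absurd (by rw [hv.dist_right_eq_one hx, hv.dist_right_eq_one hy]) hne
    · exact ⟨w, hw, hne⟩
  · intro h x y hxy
    by_cases hx : x = v
    · subst hx
      exact ⟨x, mem_insert_self _ _, by simp [hv.dist_right_eq_one (Ne.symm hxy)]⟩
    by_cases hy : y = v
    · subst hy
      exact ⟨y, mem_insert_self _ _, by simp [hv.dist_right_eq_one hxy]⟩
    obtain ⟨w, hw, hne⟩ := h x y hx hy hxy
    exact ⟨w, mem_insert_of_mem hw, hne⟩

lemma isResolvingSet_of_insert {E : Finset V} (hW : IsResolvingSet G (insert v E))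
    (hsep : ∀ x, x ≠ v → ∃ w ∈ E, G.dist x w ≠ G.dist v w) : IsResolvingSet G E := by
  intro x y hxy
  by_cases hx : x = v
  · subst hx
    obtain ⟨w, hw, hne⟩ := hsep y (Ne.symm hxy)
    exact ⟨w, hw, hne.symm⟩
  by_cases hy : y = v
  · exact hy ▸ hsep x hx
  exact hv.isResolvingSet_insert_iff.mp hW x y hx hy hxy

lemma exists_notMem_isResolvingSet_insert {E : Finset V}
    (hW : IsResolvingSet G (insert v E)) (hE : ¬IsResolvingSet G E) :
    ∃ p ∉ insert v E, IsResolvingSet G (insert p E) := by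
  rw [hv.isResolvingSet_insert_iff] at hW
  have eq_of_unseparated : ∀ x y, x ≠ v → y ≠ v → (∀ w ∈ E, G.dist x w = G.dist y w) → x = y :=
    fun x y hx hy hxy ↦ by_contra fun hne ↦ by
      obtain ⟨w, hw, hw'⟩ := hW x y hx hy hne
      exact hw' (hxy w hw)
  have unseparated_pair : ∀ x y, x ≠ y → (∀ w ∈ E, G.dist x w = G.dist y w) → x = v ∨ y = v :=
    fun x y hne hxy ↦ by
      by_contra! h
      exact hne (eq_of_unseparated x y h.1 h.2 hxy)
  -- `E` separates everything except `v` from a single twin `p`, and `p` itself separates those two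
  obtain ⟨p, hpv, hp⟩ : ∃ p, p ≠ v ∧ ∀ w ∈ E, G.dist p w = G.dist v w := by
    simp only [IsResolvingSet, not_forall, not_exists, not_and, not_not] at hE
    obtain ⟨x, y, hne, hxy⟩ := hE
    rcases unseparated_pair x y hne hxy with rfl | rfl
    · exact ⟨y, hne.symm, fun w hw ↦ (hxy w hw).symm⟩
    · exact ⟨x, hne, hxy⟩
  have hpE : p ∉ E := fun h ↦ by simpa [hv.dist_left_eq_one hpv] using hp p h
  have eq_p : ∀ x, x ≠ v → (∀ w ∈ E, G.dist x w = G.dist v w) → x = p :=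
    fun x hx hxv ↦ eq_of_unseparated x p hx hpv fun w hw ↦ (hxv w hw).trans (hp w hw).symm
  have hp_sep : G.dist v p ≠ G.dist p p := by simp [hv.dist_left_eq_one hpv]
  refine ⟨p, by simp [hpv, hpE], fun x y hne ↦ ?_⟩
  by_cases hsep : ∃ w ∈ E, G.dist x w ≠ G.dist y w
  · obtain ⟨w, hw, hw'⟩ := hsep
    exact ⟨w, mem_insert_of_mem hw, hw'⟩
  push Not at hsep
  refine ⟨p, mem_insert_self p E, ?_⟩
  rcases unseparated_pair x y hne hsep with rfl | rfl
  · rwa [eq_p y (Ne.symm hne) fun w hw ↦ (hsep w hw).symm]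
  · rw [eq_p x hne hsep]
    exact hp_sep.symm

theorem notMem_of_isMetricBasis (hu : UniquelyDimensional G) {B : Finset V}
    (hB : IsMetricBasis G B) : v ∉ B := by
  intro hvB
  have hE : ¬IsResolvingSet G (B.erase v) := fun h ↦ by
    have := h.metricDim_le
    have := card_erase_lt_of_mem hvB
    have := hB.2
    omega
  rw [← insert_erase hvB] at hB
  obtain ⟨p, hp, hres⟩ := hv.exists_notMem_isResolvingSet_insert hB.1 hE
  have hcard : #(insert p (B.erase v)) = #(insert v (B.erase v)) := by
    rw [card_insert_of_notMem (mt mem_insert_of_mem hp),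
      card_insert_of_notMem (notMem_erase v B)]
  have := hu.unique ⟨hres, hcard.trans hB.2⟩ hB
  exact hp (this ▸ mem_insert_self p _)

theorem metricDim_lt_card (hu : UniquelyDimensional G) {W : Finset V}
    (hW : IsResolvingSet G W) (hvW : v ∈ W) : metricDim G < #W :=
  hW.metricDim_le.lt_of_ne fun h ↦ hv.notMem_of_isMetricBasis hu ⟨hW, h.symm⟩ hvW

end SimpleGraph.IsUniversal

end MetricDimension

namespace SimpleGraph

variable {V₁ V₂ : Type*}

def join (G₁ : SimpleGraph V₁) (G₂ : SimpleGraph V₂) : SimpleGraph (V₁ ⊕ V₂) :=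
  (G₁ ⊕g G₂) ⊔ completeBipartiteGraph V₁ V₂

variable {G₁ : SimpleGraph V₁} {G₂ : SimpleGraph V₂}

@[simp] lemma join_adj_inl_inl {a b : V₁} : (G₁.join G₂).Adj (.inl a) (.inl b) ↔ G₁.Adj a b := by
  simp [join]

@[simp] lemma join_adj_inr_inr {a b : V₂} : (G₁.join G₂).Adj (.inr a) (.inr b) ↔ G₂.Adj a b := by
  simp [join]

@[simp] lemma join_adj_inl_inr {a : V₁} {b : V₂} : (G₁.join G₂).Adj (.inl a) (.inr b) := by
  simp [join]

@[simp] lemma join_adj_inr_inl {a : V₂} {b : V₁} : (G₁.join G₂).Adj (.inr a) (.inl b) := by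
  simp [join]

lemma IsUniversal.join_inl {v : V₁} (hv : G₁.IsUniversal v) :
    (G₁.join G₂).IsUniversal (.inl v) := by
  rintro (w | w) hw
  · exact join_adj_inl_inl.mpr (hv (by simpa using hw))
  · exact join_adj_inl_inr

lemma dist_join_inl_inr (a : V₁) (b : V₂) : (G₁.join G₂).dist (.inl a) (.inr b) = 1 :=
  dist_eq_one_iff_adj.mpr join_adj_inl_inr

lemma dist_join_inr_inl (a : V₂) (b : V₁) : (G₁.join G₂).dist (.inr a) (.inl b) = 1 :=
  dist_eq_one_iff_adj.mpr join_adj_inr_inl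

variable {v₁ : V₁} {v₂ : V₂}

lemma dist_join_inl_inl (hv₁ : G₁.IsUniversal v₁) (a b : V₁) :
    (G₁.join G₂).dist (.inl a) (.inl b) = G₁.dist a b := by
  rw [hv₁.join_inl.dist_eq, hv₁.dist_eq]
  simp

lemma dist_join_induce_inr_inr (hv₁ : G₁.IsUniversal v₁) (hv₂ : G₂.IsUniversal v₂)
    (a b : ({v₂}ᶜ : Set V₂)) :
    (G₁.join (G₂.induce {v₂}ᶜ)).dist (.inr a) (.inr b) = G₂.dist a b := by
  rw [hv₁.join_inl.dist_eq, hv₂.dist_eq]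
  simp [Subtype.ext_iff]

lemma isResolvingSet_toLeft_of_join (hv₁ : G₁.IsUniversal v₁) {W : Finset (V₁ ⊕ V₂)}
    (hW : IsResolvingSet (G₁.join G₂) W) : IsResolvingSet G₁ W.toLeft := by
  intro a b hab
  obtain ⟨w | w, hw, hne⟩ := hW (.inl a) (.inl b) (by simpa using hab)
  · rw [dist_join_inl_inl hv₁, dist_join_inl_inl hv₁] at hne
    exact ⟨w, mem_toLeft.mpr hw, hne⟩
  · simp [dist_join_inl_inr] at hne

variable (hv₁ : G₁.IsUniversal v₁) (hv₂ : G₂.IsUniversal v₂)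
include hv₁ hv₂

lemma isResolvingSet_join_disjSum {B₁ : Finset V₁} {B₂ : Finset V₂}
    (hB₁ : IsResolvingSet G₁ B₁) (hB₂ : IsResolvingSet G₂ B₂) (hv₁B : v₁ ∉ B₁) (hv₂B : v₂ ∉ B₂) :
    IsResolvingSet (G₁.join (G₂.induce {v₂}ᶜ)) (B₁.disjSum (B₂.subtype _)) := by
  have right_witness : ∀ {w}, w ∈ B₂ → ∃ c : ({v₂}ᶜ : Set V₂),
      (c : V₂) = w ∧ .inr c ∈ B₁.disjSum (B₂.subtype _) := fun {w} hw ↦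
    have hw' : w ∈ ({v₂}ᶜ : Set V₂) :=
      Set.mem_compl_singleton_iff.mpr (by rintro rfl; exact hv₂B hw)
    ⟨⟨w, hw'⟩, rfl, by simpa using hw⟩
  set H := G₁.join (G₂.induce {v₂}ᶜ)
  have cross : ∀ a b, ∃ w ∈ B₁.disjSum (B₂.subtype _), H.dist (.inl a) w ≠ H.dist (.inr b) w := by
    intro a b
    by_cases ha : a = v₁
    · obtain ⟨w, hw, hne⟩ := hB₂ b v₂ b.2
      obtain ⟨c, rfl, hc⟩ := right_witness hw
      refine ⟨.inr c, hc, ?_⟩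
      rw [dist_join_inl_inr, dist_join_induce_inr_inr hv₁ hv₂]
      rw [hv₂.dist_left_eq_one c.2] at hne
      exact Ne.symm hne
    · obtain ⟨w, hw, hne⟩ := hB₁ a v₁ ha
      have hwv : w ≠ v₁ := fun h ↦ hv₁B (h ▸ hw)
      refine ⟨.inl w, by simpa using hw, ?_⟩
      rwa [dist_join_inl_inl hv₁, dist_join_inr_inl, ← hv₁.dist_left_eq_one hwv]
  rintro (a | a) (b | b) hab
  · obtain ⟨w, hw, hne⟩ := hB₁ a b (by simpa using hab)
    refine ⟨.inl w, by simpa using hw, ?_⟩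
    rwa [dist_join_inl_inl hv₁, dist_join_inl_inl hv₁]
  · exact cross a b
  · obtain ⟨w, hw, hne⟩ := cross b a
    exact ⟨w, hw, hne.symm⟩
  · obtain ⟨w, hw, hne⟩ := hB₂ a b (by simpa [Subtype.ext_iff] using hab)
    obtain ⟨c, rfl, hc⟩ := right_witness hw
    refine ⟨.inr c, hc, ?_⟩
    rwa [dist_join_induce_inr_inr hv₁ hv₂, dist_join_induce_inr_inr hv₁ hv₂]

lemma isResolvingSet_insert_map_toRight_of_join {W : Finset (V₁ ⊕ ({v₂}ᶜ : Set V₂))}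
    (hW : IsResolvingSet (G₁.join (G₂.induce {v₂}ᶜ)) W) :
    IsResolvingSet G₂ (insert v₂ (W.toRight.map (Function.Embedding.subtype _))) := by
  refine hv₂.isResolvingSet_insert_iff.mpr fun x y hx hy hxy ↦ ?_
  obtain ⟨w | w, hw, hne⟩ := hW (.inr ⟨x, hx⟩) (.inr ⟨y, hy⟩)
    (by simpa [Subtype.ext_iff] using hxy)
  · simp [dist_join_inr_inl] at hne
  · rw [dist_join_induce_inr_inr hv₁ hv₂, dist_join_induce_inr_inr hv₁ hv₂] at hne
    exact ⟨w, mem_map_of_mem _ (mem_toRight.mpr hw), hne⟩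

lemma isResolvingSet_map_toRight_of_join {W : Finset (V₁ ⊕ ({v₂}ᶜ : Set V₂))}
    (hW : IsResolvingSet (G₁.join (G₂.induce {v₂}ᶜ)) W) (hv₁W : .inl v₁ ∉ W) :
    IsResolvingSet G₂ (W.toRight.map (Function.Embedding.subtype _)) := by
  refine hv₂.isResolvingSet_of_insert
    (isResolvingSet_insert_map_toRight_of_join hv₁ hv₂ hW) fun x hx ↦ ?_
  -- as `v₁ ∉ W`, only the `G₂` side can separate `x` from `v₁`, which there plays the role of `v₂`
  obtain ⟨w | w, hw, hne⟩ := hW (.inr ⟨x, hx⟩) (.inl v₁) (by simp)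
  · have hwv : w ≠ v₁ := by rintro rfl; exact hv₁W hw
    simp [dist_join_inr_inl, dist_join_inl_inl hv₁, hv₁.dist_left_eq_one hwv] at hne
  · rw [dist_join_induce_inr_inr hv₁ hv₂, dist_join_inl_inr, ← hv₂.dist_left_eq_one w.2] at hne
    exact ⟨w, mem_map_of_mem _ (mem_toRight.mpr hw), hne⟩

lemma eq_disjSum_of_isResolvingSet_join (hu₁ : UniquelyDimensional G₁)
    (hu₂ : UniquelyDimensional G₂) {B₁ : Finset V₁} {B₂ : Finset V₂}
    (hB₁ : IsMetricBasis G₁ B₁) (hB₂ : IsMetricBasis G₂ B₂) {W : Finset (V₁ ⊕ ({v₂}ᶜ : Set V₂))}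
    (hW : IsResolvingSet (G₁.join (G₂.induce {v₂}ᶜ)) W)
    (hcard : #W ≤ metricDim G₁ + metricDim G₂) :
    W = B₁.disjSum (B₂.subtype _) := by
  have hW_card := card_toLeft_add_card_toRight (u := W)
  have hL := isResolvingSet_toLeft_of_join hv₁ hW
  have hv₁W : .inl v₁ ∉ W := fun h ↦ by
    have := hv₁.metricDim_lt_card hu₁ hL (mem_toLeft.mpr h)
    have := hv₂.metricDim_lt_card hu₂ (isResolvingSet_insert_map_toRight_of_join hv₁ hv₂ hW)
      (mem_insert_self _ _)
    have := card_insert_le v₂ (W.toRight.map (Function.Embedding.subtype _))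
    rw [card_map] at this
    omega
  have hR := isResolvingSet_map_toRight_of_join hv₁ hv₂ hW hv₁W
  have := hL.metricDim_le
  have := hR.metricDim_le
  rw [card_map] at this
  have hL_eq : W.toLeft = B₁ := hu₁.unique ⟨hL, by omega⟩ hB₁
  have hR_eq : W.toRight.map (Function.Embedding.subtype _) = B₂ :=
    hu₂.unique ⟨hR, by rw [card_map]; omega⟩ hB₂
  rw [← toLeft_disjSum_toRight (u := W), hL_eq]
  congr
  apply Finset.map_injective (Function.Embedding.subtype _)
  rw [hR_eq, subtype_map_of_mem]
  rintro w hw rfl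
  exact hv₂.notMem_of_isMetricBasis hu₂ hB₂ hw

theorem uniquelyKDimensional_join {k₁ k₂ : ℕ} (hu₁ : UniquelyKDimensional G₁ k₁)
    (hu₂ : UniquelyKDimensional G₂ k₂) :
    UniquelyKDimensional (G₁.join (G₂.induce {v₂}ᶜ)) (k₁ + k₂) := by
  obtain ⟨hu₁, rfl⟩ := hu₁
  obtain ⟨hu₂, rfl⟩ := hu₂
  obtain ⟨B₁, hB₁⟩ := hu₁.exists
  obtain ⟨B₂, hB₂⟩ := hu₂.exists
  have hv₂B := hv₂.notMem_of_isMetricBasis hu₂ hB₂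
  have hB := isResolvingSet_join_disjSum hv₁ hv₂ hB₁.1 hB₂.1
    (hv₁.notMem_of_isMetricBasis hu₁ hB₁) hv₂B
  have hB_card :
      #(B₁.disjSum (B₂.subtype (· ∈ ({v₂}ᶜ : Set V₂)))) = metricDim G₁ + metricDim G₂ := by
    rw [card_disjSum, card_subtype, filter_true_of_mem, hB₁.2, hB₂.2]
    rintro w hw rfl
    exact hv₂B hw
  have eq_of_le := fun W hW ↦ eq_disjSum_of_isResolvingSet_join hv₁ hv₂ hu₁ hu₂ hB₁ hB₂ (W := W) hW
  obtain ⟨W, hW, hW_card⟩ := hB.exists_isMetricBasis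
  have hdim : metricDim (G₁.join (G₂.induce {v₂}ᶜ)) = metricDim G₁ + metricDim G₂ := by
    rw [← hW_card, eq_of_le W hW (hW_card ▸ hB_card ▸ hB.metricDim_le), hB_card]
  exact ⟨⟨_, ⟨hB, hB_card.trans hdim.symm⟩, fun W hW ↦ eq_of_le W hW.1 (hW.2.trans hdim).le⟩,
    hdim⟩

end SimpleGraph

namespace SimpleGraph.Iso

variable {V V' : Type*} {G : SimpleGraph V} {G' : SimpleGraph V'} (φ : G ≃g G')
include φ

lemma dist_le (u v : V) : G'.dist (φ u) (φ v) ≤ G.dist u v := by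
  by_cases h : G.Reachable u v
  · obtain ⟨p, hp⟩ := h.exists_walk_length_eq_dist
    simpa [hp] using SimpleGraph.dist_le (p.map φ.toHom)
  · simp [dist_eq_zero_of_not_reachable (mt Iso.reachable_iff.mp h)]

lemma dist_eq (u v : V) : G'.dist (φ u) (φ v) = G.dist u v :=
  (φ.dist_le u v).antisymm (by simpa using φ.symm.dist_le (φ u) (φ v))

lemma isResolvingSet_map {W : Finset V} (hW : IsResolvingSet G W) :
    IsResolvingSet G' (W.map φ.toEquiv.toEmbedding) := by
  intro x y hxy
  obtain ⟨w, hw, hne⟩ := hW (φ.symm x) (φ.symm y) (by simpa using hxy)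
  refine ⟨φ w, mem_map_of_mem _ hw, ?_⟩
  simpa [← φ.dist_eq] using hne

lemma metricDim_eq : metricDim G' = metricDim G := by
  unfold metricDim
  congr 1
  ext k
  constructor
  · rintro ⟨W, hW, rfl⟩
    exact ⟨W.map φ.symm.toEquiv.toEmbedding, φ.symm.isResolvingSet_map hW, card_map _⟩
  · rintro ⟨W, hW, rfl⟩
    exact ⟨W.map φ.toEquiv.toEmbedding, φ.isResolvingSet_map hW, card_map _⟩

lemma isMetricBasis_map {B : Finset V} (hB : IsMetricBasis G B) :
    IsMetricBasis G' (B.map φ.toEquiv.toEmbedding) :=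
  ⟨φ.isResolvingSet_map hB.1, by rw [card_map, hB.2, φ.metricDim_eq]⟩

lemma uniquelyKDimensional {k : ℕ} (h : UniquelyKDimensional G k) : UniquelyKDimensional G' k := by
  obtain ⟨⟨B, hB, huniq⟩, hk⟩ := h
  refine ⟨⟨B.map φ.toEquiv.toEmbedding, φ.isMetricBasis_map hB, fun S hS ↦ ?_⟩,
    φ.metricDim_eq.trans hk⟩
  rw [← huniq _ (φ.symm.isMetricBasis_map hS), Finset.map_map]
  ext
  simp

lemma isUniversal {v : V} (hv : G.IsUniversal v) : G'.IsUniversal (φ v) := by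
  intro w hw
  simpa using φ.map_adj_iff.mpr (hv (w := φ.symm w) fun h ↦ hw (by simp [h]))

end SimpleGraph.Iso

lemma SimpleGraph.natCard_neighborSet_eq_card_sub_one_iff {V : Type*} [Fintype V]
    {G : SimpleGraph V} {v : V} :
    Nat.card (G.neighborSet v) = Fintype.card V - 1 ↔ G.IsUniversal v := by
  rw [Nat.card_eq_fintype_card, card_neighborSet_eq_degree, degree_eq_card_sub_one]

theorem stmt14_general {V₁ V₂ : Type*} [Fintype V₁] [Fintype V₂]
    (G₁ : SimpleGraph V₁) (G₂ : SimpleGraph V₂)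
    (k₁ k₂ n₁ n₂ : ℕ)
    (hc₁ : Fintype.card V₁ = n₁) (hc₂ : Fintype.card V₂ = n₂)
    (hu₁ : UniquelyKDimensional G₁ k₁) (hu₂ : UniquelyKDimensional G₂ k₂)
    (hd₁ : ∃ v, Nat.card (G₁.neighborSet v) = n₁ - 1)
    (hd₂ : ∃ v, Nat.card (G₂.neighborSet v) = n₂ - 1) :
    ∃ G : SimpleGraph (Fin (n₁ + n₂ - 1)), G.Connected ∧
      UniquelyKDimensional G (k₁ + k₂) ∧
      ∃ v, Nat.card (G.neighborSet v) = n₁ + n₂ - 2 := by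
  subst hc₁ hc₂
  obtain ⟨v₁, hv₁⟩ := hd₁
  obtain ⟨v₂, hv₂⟩ := hd₂
  rw [natCard_neighborSet_eq_card_sub_one_iff] at hv₁ hv₂
  have hcard : Fintype.card (V₁ ⊕ ({v₂}ᶜ : Set V₂)) = Fintype.card V₁ + Fintype.card V₂ - 1 := by
    have := Fintype.card_pos_iff.mpr ⟨v₂⟩
    rw [Fintype.card_sum, Fintype.card_compl_set, Fintype.card_unique (α := ({v₂} : Set V₂))]
    omega
  let φ := (Iso.comap (Fintype.equivFinOfCardEq hcard).symm (G₁.join (G₂.induce {v₂}ᶜ))).symm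
  have hv := φ.isUniversal hv₁.join_inl
  refine ⟨_, .of_isUniversal hv, φ.uniquelyKDimensional (uniquelyKDimensional_join hv₁ hv₂ hu₁ hu₂),
    φ (.inl v₁), ?_⟩
  rw [natCard_neighborSet_eq_card_sub_one_iff.mpr hv, Fintype.card_fin]
  omega

theorem stmt14 {V₁ V₂ : Type*} [Fintype V₁] [Fintype V₂]
    (G₁ : SimpleGraph V₁) (G₂ : SimpleGraph V₂)
    (h₁ : G₁.Connected) (h₂ : G₂.Connected) (k₁ k₂ n₁ n₂ : ℕ)
    (hc₁ : Fintype.card V₁ = n₁) (hc₂ : Fintype.card V₂ = n₂)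
    (hu₁ : UniquelyKDimensional G₁ k₁) (hu₂ : UniquelyKDimensional G₂ k₂)
    (hd₁ : ∃ v, Nat.card (G₁.neighborSet v) = n₁ - 1)
    (hd₂ : ∃ v, Nat.card (G₂.neighborSet v) = n₂ - 1) :
    ∃ G : SimpleGraph (Fin (n₁ + n₂ - 1)), G.Connected ∧
      UniquelyKDimensional G (k₁ + k₂) ∧
      ∃ v, Nat.card (G.neighborSet v) = n₁ + n₂ - 2 :=
  stmt14_general G₁ G₂ k₁ k₂ n₁ n₂ hc₁ hc₂ hu₁ hu₂ hd₁ hd₂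
end

section
/- For every integer k ≥ 2, there exists a uniquely k-dimensional finite connected simple graph of order 3k. -/
open SimpleGraph

/-!
For `k ≥ 3` take the vertex set `Fin 3 × ZMod k`: the `2k` vertices `(1, m)`, `(2, m)` form a
clique, the `k` vertices `(0, j)` are independent, and `(0, j)` is adjacent to `(r, m)` unless
`j ∈ missed r m`, i.e. unless `j = m + 1`, or `r = 2` and `j = m`. Any two vertices are at distance
at most two, so `W` is resolving iff the vertices outside `W` are told apart by their neighbours in
`W`. As `(1, m)` and `(2, m)` are separated only by `(0, m)`, a resolving set meets every fibre
`{(r, m)}`, hence has at least `k` vertices; the `k` vertices `(0, j)` resolve because the sets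
`missed r m` are pairwise distinct. A resolving set `W` with one vertex per fibre contains every
`(0, s)`: otherwise it misses a second one `(0, s')`, since else `(1, s - 2)` and `(2, s - 1)` would
have the same neighbours in `W`; and then the fibres of `s - 1` and `s' - 1` each contain a clique
vertex outside `W` adjacent to all of `W`. For `k = 2` a graph on six vertices (a `K₄` with two
more vertices, each joined to two of its vertices) is checked by computation.
-/

open Finset

variable {V V' : Type*} {G : SimpleGraph V} {G' : SimpleGraph V'}

namespace SimpleGraph

theorem Hom.dist_map_le (f : G →g G') {u v : V} (h : G.Reachable u v) :
    G'.dist (f u) (f v) ≤ G.dist u v := by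
  obtain ⟨p, hp⟩ := h.exists_walk_length_eq_dist
  simpa [hp] using dist_le (p.map f)

theorem Iso.dist_eq_s17 (e : G ≃g G') (u v : V) : G'.dist (e u) (e v) = G.dist u v := by
  by_cases h : G.Reachable u v
  · refine le_antisymm (e.toHom.dist_map_le h) ?_
    simpa using e.symm.toHom.dist_map_le ((Iso.reachable_iff (φ := e)).mpr h)
  · rw [dist_eq_zero_of_not_reachable h,
      dist_eq_zero_of_not_reachable (mt Iso.reachable_iff.mp h)]

end SimpleGraph

theorem IsResolvingSet.map {W : Finset V} (e : G ≃g G') (hW : IsResolvingSet G W) :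
    IsResolvingSet G' (W.map e.toEquiv.toEmbedding) := by
  intro u v huv
  obtain ⟨w, hw, hd⟩ := hW (e.symm u) (e.symm v) (e.symm.injective.ne huv)
  refine ⟨e w, mem_map_of_mem _ hw, ?_⟩
  rwa [← e.apply_symm_apply u, ← e.apply_symm_apply v, e.dist_eq_s17, e.dist_eq_s17]

theorem SimpleGraph.Iso.metricDim_eq_s17 (e : G ≃g G') : metricDim G' = metricDim G := by
  unfold metricDim
  congr 1
  ext n
  constructor
  · rintro ⟨W, hW, rfl⟩
    exact ⟨W.map e.symm.toEquiv.toEmbedding, hW.map e.symm, card_map _⟩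
  · rintro ⟨W, hW, rfl⟩
    exact ⟨W.map e.toEquiv.toEmbedding, hW.map e, card_map _⟩

theorem IsMetricBasis.map {B : Finset V} (e : G ≃g G') (hB : IsMetricBasis G B) :
    IsMetricBasis G' (B.map e.toEquiv.toEmbedding) :=
  ⟨hB.1.map e, by rw [card_map, hB.2, e.metricDim_eq_s17]⟩

theorem UniquelyKDimensional.map {k : ℕ} (e : G ≃g G') (hG : UniquelyKDimensional G k) :
    UniquelyKDimensional G' k := by
  obtain ⟨⟨B, hB, huniq⟩, hdim⟩ := hG
  refine ⟨⟨B.map e.toEquiv.toEmbedding, hB.map e, fun B' hB' => ?_⟩,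
    e.metricDim_eq_s17.trans hdim⟩
  rw [← huniq _ (hB'.map e.symm), Finset.map_map]
  ext x
  simp

theorem uniquelyKDimensional_of_forall_card_le {A : Finset V} {k : ℕ}
    (hA : IsResolvingSet G A) (hAk : A.card = k)
    (h : ∀ W : Finset V, IsResolvingSet G W → W.card ≤ k → W = A) :
    UniquelyKDimensional G k := by
  have hmem : k ∈ {n | ∃ W : Finset V, IsResolvingSet G W ∧ W.card = n} := ⟨A, hA, hAk⟩
  have hdim : metricDim G = k := by
    refine le_antisymm (Nat.sInf_le hmem) (le_csInf ⟨k, hmem⟩ ?_)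
    rintro _ ⟨W, hW, rfl⟩
    by_contra! hlt
    exact hlt.ne (hAk ▸ congrArg card (h W hW hlt.le))
  exact ⟨⟨A, ⟨hA, hAk.trans hdim.symm⟩, fun B hB => h B hB.1 (hB.2.trans hdim).le⟩, hdim⟩

def DiamLeTwo (G : SimpleGraph V) : Prop :=
  ∀ ⦃u v⦄, u ≠ v → ¬G.Adj u v → ∃ w, G.Adj u w ∧ G.Adj w v

def IsAdjResolvingSet (G : SimpleGraph V) (W : Finset V) : Prop :=
  ∀ ⦃u v⦄, u ∉ W → v ∉ W → (∀ w ∈ W, G.Adj u w ↔ G.Adj v w) → u = v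

namespace DiamLeTwo

theorem reachable (hG : DiamLeTwo G) (u v : V) : G.Reachable u v := by
  by_cases huv : u = v
  · exact huv ▸ Reachable.refl u
  by_cases hadj : G.Adj u v
  · exact hadj.reachable
  obtain ⟨w, huw, hwv⟩ := hG huv hadj
  exact huw.reachable.trans hwv.reachable

theorem connected [Nonempty V] (hG : DiamLeTwo G) : G.Connected :=
  ⟨hG.reachable⟩

open scoped Classical in
theorem dist_eq_s17 (hG : DiamLeTwo G) (u v : V) :
    G.dist u v = if u = v then 0 else if G.Adj u v then 1 else 2 := by
  split_ifs with huv hadj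
  · simp [huv]
  · exact dist_eq_one_iff_adj.mpr hadj
  obtain ⟨w, huw, hwv⟩ := hG huv hadj
  have hle : G.dist u v ≤ 2 := dist_le (huw.toWalk.append hwv.toWalk)
  have hpos : 0 < G.dist u v := (hG.reachable u v).pos_dist_of_ne huv
  have hne : G.dist u v ≠ 1 := mt dist_eq_one_iff_adj.mp hadj
  omega

theorem dist_eq_dist_iff (hG : DiamLeTwo G) {u v w : V} (hu : u ≠ w) (hv : v ≠ w) :
    G.dist u w = G.dist v w ↔ (G.Adj u w ↔ G.Adj v w) := by
  rw [hG.dist_eq_s17, hG.dist_eq_s17, if_neg hu, if_neg hv]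
  split_ifs <;> simp_all

theorem isResolvingSet_iff (hG : DiamLeTwo G) (W : Finset V) :
    IsResolvingSet G W ↔ IsAdjResolvingSet G W := by
  constructor
  · intro hW u v hu hv hadj
    by_contra huv
    obtain ⟨w, hw, hd⟩ := hW u v huv
    exact hd ((hG.dist_eq_dist_iff (ne_of_mem_of_not_mem hw hu).symm
      (ne_of_mem_of_not_mem hw hv).symm).mpr (hadj w hw))
  · intro hW u v huv
    by_cases hu : u ∈ W
    · exact ⟨u, hu, by rw [dist_self]; exact ((hG.reachable v u).pos_dist_of_ne huv.symm).ne⟩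
    by_cases hv : v ∈ W
    · exact ⟨v, hv, by rw [dist_self]; exact ((hG.reachable u v).pos_dist_of_ne huv).ne'⟩
    by_contra! hd
    refine huv (hW hu hv fun w hw => ?_)
    exact (hG.dist_eq_dist_iff (ne_of_mem_of_not_mem hw hu).symm
      (ne_of_mem_of_not_mem hw hv).symm).mp (hd w hw)

end DiamLeTwo

theorem ZMod.add_one_ne_self {k : ℕ} (hk : 2 ≤ k) (m : ZMod k) : m + 1 ≠ m := by
  rw [Ne, add_eq_left, ← Nat.cast_one, ZMod.natCast_eq_zero_iff]
  exact Nat.not_dvd_of_pos_of_lt one_pos hk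

theorem ZMod.add_one_add_one_ne_self {k : ℕ} (hk : 3 ≤ k) (m : ZMod k) : m + 1 + 1 ≠ m := by
  rw [Ne, add_assoc, add_eq_left, one_add_one_eq_two, ← Nat.cast_two, ZMod.natCast_eq_zero_iff]
  exact Nat.not_dvd_of_pos_of_lt two_pos hk

namespace UniqueBasisGraph

variable {k : ℕ}

def missed (r : Fin 3) (m : ZMod k) : Finset (ZMod k) :=
  if r = 2 then {m, m + 1} else {m + 1}

@[simp] theorem missed_one (m : ZMod k) : missed 1 m = {m + 1} := rfl

@[simp] theorem missed_two (m : ZMod k) : missed 2 m = {m, m + 1} := rfl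

theorem card_missed (hk : 2 ≤ k) {r : Fin 3} (hr : r ≠ 0) (m : ZMod k) :
    (missed r m).card = r := by
  fin_cases r
  · exact absurd rfl hr
  · simp
  · simp [card_pair (ZMod.add_one_ne_self hk m).symm]

theorem missed_injective (hk : 3 ≤ k) {r r' : Fin 3} {m m' : ZMod k} (hr : r ≠ 0)
    (hr' : r' ≠ 0) (h : missed r m = missed r' m') : r = r' ∧ m = m' := by
  obtain rfl : r = r' := by
    ext
    rw [← card_missed (by omega) hr m, ← card_missed (by omega) hr' m', h]
  refine ⟨rfl, ?_⟩
  fin_cases r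
  · exact absurd rfl hr
  · simpa using h
  · have hm : m ∈ missed 2 m' := h ▸ mem_insert_self _ _
    have hm' : m' ∈ missed 2 m := h.symm ▸ mem_insert_self _ _
    simp only [missed_two, mem_insert, mem_singleton] at hm hm'
    rcases hm with rfl | rfl
    · rfl
    · rcases hm' with h' | h'
      · exact absurd h'.symm (ZMod.add_one_ne_self (by omega) m')
      · exact absurd h'.symm (ZMod.add_one_add_one_ne_self hk m')

def _root_.uniqueBasisGraph (k : ℕ) : SimpleGraph (Fin 3 × ZMod k) :=
  SimpleGraph.fromRel fun x y => x.1 ≠ 0 ∧ (y.1 ≠ 0 ∨ y.2 ∉ missed x.1 x.2)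

theorem adj_iff_of_ne_zero {r r' : Fin 3} (hr : r ≠ 0) (hr' : r' ≠ 0) (m m' : ZMod k) :
    (uniqueBasisGraph k).Adj (r, m) (r', m') ↔ (r, m) ≠ (r', m') := by
  simp [uniqueBasisGraph, hr, hr']

theorem zero_adj_iff {r : Fin 3} (hr : r ≠ 0) (j m : ZMod k) :
    (uniqueBasisGraph k).Adj (0, j) (r, m) ↔ j ∉ missed r m := by
  simp [uniqueBasisGraph, hr, Ne.symm hr]

theorem adj_zero_iff {r : Fin 3} (hr : r ≠ 0) (m j : ZMod k) :
    (uniqueBasisGraph k).Adj (r, m) (0, j) ↔ j ∉ missed r m := by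
  rw [adj_comm, zero_adj_iff hr]

theorem diamLeTwo (hk : 3 ≤ k) : DiamLeTwo (uniqueBasisGraph k) := by
  have zero_adj_one (j : ZMod k) : (uniqueBasisGraph k).Adj (0, j) (1, j) :=
    (zero_adj_iff one_ne_zero j j).mpr (by simpa using (ZMod.add_one_ne_self (by omega) j).symm)
  have common_nbr {j m : ZMod k} {r : Fin 3} (hr : r ≠ 0)
      (hnadj : ¬(uniqueBasisGraph k).Adj (0, j) (r, m)) :
      ∃ w, (uniqueBasisGraph k).Adj (0, j) w ∧ (uniqueBasisGraph k).Adj w (r, m) := by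
    refine ⟨(1, j), zero_adj_one j, (adj_iff_of_ne_zero one_ne_zero hr _ _).mpr ?_⟩
    rintro h
    exact hnadj (h ▸ zero_adj_one j)
  rintro ⟨r, i⟩ ⟨r', j⟩ hne hnadj
  by_cases hr : r = 0 <;> by_cases hr' : r' = 0
  · subst hr hr'
    obtain ⟨m, hi, hj⟩ : ∃ m : ZMod k, i ≠ m + 1 ∧ j ≠ m + 1 := by
      by_cases hij : j = i + 1
      · exact ⟨j, hij ▸ (ZMod.add_one_add_one_ne_self hk i).symm,
          (ZMod.add_one_ne_self (by omega) j).symm⟩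
      · exact ⟨i, (ZMod.add_one_ne_self (by omega) i).symm, hij⟩
    exact ⟨(1, m), (zero_adj_iff one_ne_zero i m).mpr (by simpa),
      (adj_zero_iff one_ne_zero m j).mpr (by simpa)⟩
  · subst hr
    exact common_nbr hr' hnadj
  · subst hr'
    obtain ⟨w, h₁, h₂⟩ := common_nbr hr fun h => hnadj h.symm
    exact ⟨w, h₂.symm, h₁.symm⟩
  · exact absurd ((adj_iff_of_ne_zero hr hr' _ _).mpr hne) hnadj

theorem exists_mem_snd_eq {W : Finset (Fin 3 × ZMod k)}
    (hW : IsAdjResolvingSet (uniqueBasisGraph k) W) (m : ZMod k) : ∃ w ∈ W, w.2 = m := by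
  by_contra! h
  have h12 : ((1, m) : Fin 3 × ZMod k) = (2, m) := by
    refine hW (fun h' => h _ h' rfl) (fun h' => h _ h' rfl) fun ⟨r, j⟩ hw => ?_
    have hj : j ≠ m := h _ hw
    by_cases hr : r = 0
    · subst hr
      rw [adj_zero_iff one_ne_zero, adj_zero_iff (by decide)]
      simp [hj]
    · have hne (r' : Fin 3) : ((r', m) : Fin 3 × ZMod k) ≠ (r, j) :=
        fun h => hj (congrArg Prod.snd h).symm
      rw [adj_iff_of_ne_zero one_ne_zero hr, adj_iff_of_ne_zero (by decide) hr]
      exact iff_of_true (hne 1) (hne 2)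
  simp at h12

theorem exists_notMem_forall_adj {W : Finset (Fin 3 × ZMod k)}
    (hinj : Set.InjOn Prod.snd (W : Set (Fin 3 × ZMod k))) {s : ZMod k} (hs : (0, s) ∉ W) :
    ∃ c ∉ W, c.2 + 1 = s ∧ ∀ w ∈ W, (uniqueBasisGraph k).Adj c w := by
  have hts : s - 1 + 1 = s := sub_add_cancel s 1
  have forall_adj {r : Fin 3} (hr : r ≠ 0) (hc : (r, s - 1) ∉ W)
      (hmissed : ∀ j, (0, j) ∈ W → j ∉ missed r (s - 1)) :
      ∀ w ∈ W, (uniqueBasisGraph k).Adj (r, s - 1) w := by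
    rintro ⟨r', j⟩ hw
    by_cases hr' : r' = 0
    · subst hr'
      exact (adj_zero_iff hr _ j).mpr (hmissed j hw)
    · exact (adj_iff_of_ne_zero hr hr' _ _).mpr fun h => hc (h ▸ hw)
  by_cases hu : ((1, s - 1) : Fin 3 × ZMod k) ∈ W
  · have notMem_of_ne {r : Fin 3} (hr : r ≠ 1) : ((r, s - 1) : Fin 3 × ZMod k) ∉ W :=
      fun h => hr (congrArg Prod.fst (hinj h hu rfl))
    refine ⟨(2, s - 1), notMem_of_ne (by decide), hts,
      forall_adj (by decide) (notMem_of_ne (by decide)) fun j hj => ?_⟩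
    simp only [missed_two, hts, mem_insert, mem_singleton, not_or]
    exact ⟨fun h : j = s - 1 => notMem_of_ne (r := 0) (by decide) (h ▸ hj),
      fun h : j = s => hs (h ▸ hj)⟩
  · refine ⟨(1, s - 1), hu, hts, forall_adj one_ne_zero hu fun j hj => ?_⟩
    simpa [hts] using fun h : j = s => hs (h ▸ hj)

theorem exists_ne_of_zero_notMem (hk : 3 ≤ k) {W : Finset (Fin 3 × ZMod k)}
    (hW : IsAdjResolvingSet (uniqueBasisGraph k) W)
    (hinj : Set.InjOn Prod.snd (W : Set (Fin 3 × ZMod k))) {s : ZMod k} (hs : (0, s) ∉ W) :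
    ∃ j ≠ s, (0, j) ∉ W := by
  by_contra! hall
  set m := s - 1 - 1
  have hm : m + 1 + 1 = s := by simp [m]
  have hm1 : m + 1 ≠ s := hm ▸ (ZMod.add_one_ne_self (by omega) _).symm
  have hm0 : m ≠ s := hm ▸ (ZMod.add_one_add_one_ne_self hk m).symm
  have snd_eq {w} (hw : w ∈ W) (hw0 : w.1 ≠ 0) : w.2 = s := by
    by_contra h
    exact hw0 (congrArg Prod.fst (hinj hw (hall _ h) rfl))
  -- `(1, s - 2)` and `(2, s - 1)` both miss exactly `(0, s - 1)` among the vertices `(0, j ≠ s)`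
  have h1 : ((1, m) : Fin 3 × ZMod k) ∉ W := fun h => hm0 (snd_eq h one_ne_zero)
  have h2 : ((2, m + 1) : Fin 3 × ZMod k) ∉ W :=
    fun h => hm1 (snd_eq h (show (2 : Fin 3) ≠ 0 by decide))
  have h12 := hW h1 h2 fun ⟨r, j⟩ hw => by
    by_cases hr : r = 0
    · subst hr
      have hj : j ≠ s := fun h => hs (h ▸ hw)
      rw [adj_zero_iff one_ne_zero, adj_zero_iff (by decide)]
      simp [hm, hj]
    · have hj : j = s := snd_eq hw hr
      rw [adj_iff_of_ne_zero one_ne_zero hr, adj_iff_of_ne_zero (by decide) hr, hj]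
      simp [hm0, hm1]
  simp at h12

section

variable [NeZero k]

def basis (k : ℕ) [NeZero k] : Finset (Fin 3 × ZMod k) := {0} ×ˢ univ

@[simp] theorem mem_basis {x : Fin 3 × ZMod k} : x ∈ basis k ↔ x.1 = 0 := by
  rw [basis, mem_product]
  simp

theorem card_basis : (basis k).card = k := by
  simp [basis, ZMod.card]

theorem isAdjResolvingSet_basis (hk : 3 ≤ k) :
    IsAdjResolvingSet (uniqueBasisGraph k) (basis k) := by
  rintro ⟨r, m⟩ ⟨r', m'⟩ hr hr' hadj
  rw [mem_basis] at hr hr'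
  have hmissed : missed r m = missed r' m' := by
    ext j
    have := hadj (0, j) (mem_basis.mpr rfl)
    rwa [adj_zero_iff hr, adj_zero_iff hr', not_iff_not] at this
  obtain ⟨rfl, rfl⟩ := missed_injective hk hr hr' hmissed
  rfl

theorem le_card {W : Finset (Fin 3 × ZMod k)} (hW : IsAdjResolvingSet (uniqueBasisGraph k) W) :
    k ≤ W.card := by
  have := card_le_card_of_surjOn Prod.snd (t := univ) fun m _ => by
    obtain ⟨w, hw, rfl⟩ := exists_mem_snd_eq hW m
    exact ⟨w, hw, rfl⟩
  rwa [card_univ, ZMod.card] at this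

theorem injOn_snd {W : Finset (Fin 3 × ZMod k)} (hW : IsAdjResolvingSet (uniqueBasisGraph k) W)
    (hcard : W.card = k) : Set.InjOn Prod.snd (W : Set (Fin 3 × ZMod k)) := by
  have himage : W.image Prod.snd = univ := eq_univ_of_forall fun m => by
    obtain ⟨w, hw, rfl⟩ := exists_mem_snd_eq hW m
    exact mem_image_of_mem _ hw
  rw [← card_image_iff, himage, card_univ, ZMod.card, hcard]

theorem eq_basis (hk : 3 ≤ k) {W : Finset (Fin 3 × ZMod k)}
    (hW : IsAdjResolvingSet (uniqueBasisGraph k) W) (hcard : W.card = k) : W = basis k := by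
  have hinj := injOn_snd hW hcard
  have hsub : basis k ⊆ W := by
    rintro ⟨r, s⟩ hs
    rw [mem_basis] at hs
    subst hs
    by_contra hsW
    obtain ⟨j, hj, hjW⟩ := exists_ne_of_zero_notMem hk hW hinj hsW
    obtain ⟨c, hc, hcs, hcW⟩ := exists_notMem_forall_adj hinj hsW
    obtain ⟨c', hc', hcj, hc'W⟩ := exists_notMem_forall_adj hinj hjW
    have hcc' : c = c' := hW hc hc' fun w hw => iff_of_true (hcW w hw) (hc'W w hw)
    exact hj (hcj ▸ hcc' ▸ hcs)
  exact (eq_of_subset_of_card_le hsub (by rw [hcard, card_basis])).symm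

theorem uniquelyKDimensional (hk : 3 ≤ k) : UniquelyKDimensional (uniqueBasisGraph k) k := by
  have hG := diamLeTwo hk
  refine uniquelyKDimensional_of_forall_card_le
    ((hG.isResolvingSet_iff _).mpr (isAdjResolvingSet_basis hk)) card_basis
    fun W hW hWk => ?_
  rw [hG.isResolvingSet_iff] at hW
  exact eq_basis hk hW (le_antisymm hWk (le_card hW))

end

end UniqueBasisGraph

def smallGraph : SimpleGraph (Fin 6) :=
  SimpleGraph.fromRel fun x y =>
    (x, y) ∈ [(0, 1), (0, 2), (0, 3), (0, 4), (0, 5), (1, 2), (1, 3), (1, 5), (2, 3), (2, 4)]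

instance : DecidableRel smallGraph.Adj := by
  unfold smallGraph
  infer_instance

theorem smallGraph_diamLeTwo : DiamLeTwo smallGraph := by
  unfold DiamLeTwo
  decide

theorem smallGraph_uniquelyKDimensional : UniquelyKDimensional smallGraph 2 := by
  have hG := smallGraph_diamLeTwo
  refine uniquelyKDimensional_of_forall_card_le (A := {4, 5})
    ((hG.isResolvingSet_iff _).mpr (by unfold IsAdjResolvingSet; decide)) rfl fun W hW => ?_
  rw [hG.isResolvingSet_iff] at hW
  revert W
  unfold IsAdjResolvingSet
  decide

theorem stmt17 (k : ℕ) (hk : 2 ≤ k) :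
    ∃ G : SimpleGraph (Fin (3 * k)), G.Connected ∧ UniquelyKDimensional G k := by
  obtain rfl | hk : k = 2 ∨ 3 ≤ k := by omega
  · exact ⟨smallGraph, smallGraph_diamLeTwo.connected, smallGraph_uniquelyKDimensional⟩
  · have : NeZero k := ⟨by omega⟩
    let e := Iso.map (Fintype.equivFinOfCardEq (n := 3 * k) (by simp [ZMod.card]))
      (uniqueBasisGraph k)
    exact ⟨_, e.connected_iff.mp (UniqueBasisGraph.diamLeTwo hk).connected,
      (UniqueBasisGraph.uniquelyKDimensional hk).map e⟩
end
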